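/- arXiv:0907.1647 — 4 statements merged into one kernel-verified Lean document; each statement's English description precedes it below -/
import Mathlib

section
/- If s and t are positive reals with s + t > 1, s ≠ 1 and t ≠ 1, then h_a = (1/(6(t-1)))(st + t - 2s - 1 + sqrt((t-1)^2 + s^2(t^2 - t + 1) - s(t^2 - 3t + 2))) lies strictly between 1/2 and s/2. -/
/-!
Write `h = (E + √D) / (6 (t - 1))` with `E = s t + t - 2 s - 1`. Then `h - 1/2 = (√D - A) / (6 (t - 1))` and
`h - s/2 = (√D - B) / (6 (t - 1))` with `A = (s + t - 1) - p` and `B = s t + p`, where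
`p = (s - 1)(t - 1) ≠ 0`, and the discriminant satisfies
`D - A² = 3 (s + t - 1) p` and `D - B² = -3 s t p`.
So `√D` lies strictly between `A` and `B` (the one of them that must exceed `√D` is positive),
which is exactly `(h - 1/2)(h - s/2) < 0`.
-/

open Set

theorem mem_Ioo_min_max_iff_mul_neg {α : Type*} [Ring α] [LinearOrder α] [IsStrictOrderedRing α]
    {a b x : α} : x ∈ Ioo (min a b) (max a b) ↔ (x - a) * (x - b) < 0 := by
  rw [mul_neg_iff, mem_Ioo, min_lt_iff, lt_max_iff, sub_pos, sub_neg, sub_pos, sub_neg]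
  constructor
  · rintro ⟨ha | hb, hxa | hxb⟩
    · exact (lt_asymm ha hxa).elim
    · exact Or.inl ⟨ha, hxb⟩
    · exact Or.inr ⟨hxa, hb⟩
    · exact (lt_asymm hb hxb).elim
  · rintro (⟨ha, hb⟩ | ⟨ha, hb⟩)
    · exact ⟨Or.inl ha, Or.inr hb⟩
    · exact ⟨Or.inr hb, Or.inl ha⟩

theorem Real.sqrt_sub_mul_sqrt_sub_neg {a b d : ℝ} (ha : a ^ 2 < d) (hb : 0 < b)
    (hdb : d < b ^ 2) : (√d - a) * (√d - b) < 0 :=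
  mul_neg_of_pos_of_neg (sub_pos.2 (Real.lt_sqrt_of_sq_lt ha))
    (sub_neg.2 ((Real.sqrt_lt' hb).2 hdb))

theorem sqrt_disc_sub_mul_sub_neg {s t D : ℝ} (hs : 0 < s) (ht : 0 < t) (hst : s + t > 1)
    (hs1 : s ≠ 1) (ht1 : t ≠ 1)
    (hD : D = (t - 1) ^ 2 + s ^ 2 * (t ^ 2 - t + 1) - s * (t ^ 2 - 3 * t + 2)) :
    (√D - ((s + t - 1) - (s - 1) * (t - 1))) * (√D - (s * t + (s - 1) * (t - 1))) < 0 := by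
  set p := (s - 1) * (t - 1)
  have hDA : D - ((s + t - 1) - p) ^ 2 = 3 * (s + t - 1) * p := by rw [hD]; ring
  have hDB : D - (s * t + p) ^ 2 = -(3 * (s * t) * p) := by rw [hD]; ring
  have hst' : 0 < s * t := mul_pos hs ht
  have hst1 : 0 < s + t - 1 := by linarith
  rcases (mul_ne_zero (sub_ne_zero.2 hs1) (sub_ne_zero.2 ht1)).lt_or_gt with hpneg | hppos
  · rw [mul_comm]
    apply Real.sqrt_sub_mul_sqrt_sub_neg
    · linarith [mul_neg_of_pos_of_neg hst' hpneg]
    · linarith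
    · linarith [mul_neg_of_pos_of_neg hst1 hpneg]
  · apply Real.sqrt_sub_mul_sqrt_sub_neg
    · linarith [mul_pos hst1 hppos]
    · linarith
    · linarith [mul_pos hst' hppos]

theorem ha_between (s t : ℝ) (hs : 0 < s) (ht : 0 < t) (hst : s + t > 1)
    (hs1 : s ≠ 1) (ht1 : t ≠ 1) :
    (1 / (6 * (t - 1))) * (s * t + t - 2 * s - 1 +
      Real.sqrt ((t - 1) ^ 2 + s ^ 2 * (t ^ 2 - t + 1) - s * (t ^ 2 - 3 * t + 2)))
      ∈ Set.Ioo (min (1 / 2) (s / 2)) (max (1 / 2) (s / 2)) := by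
  have hroot := sqrt_disc_sub_mul_sub_neg hs ht hst hs1 ht1 rfl
  set r := Real.sqrt ((t - 1) ^ 2 + s ^ 2 * (t ^ 2 - t + 1) - s * (t ^ 2 - 3 * t + 2))
  have ht1' : t - 1 ≠ 0 := sub_ne_zero.2 ht1
  have hprod : (1 / (6 * (t - 1)) * (s * t + t - 2 * s - 1 + r) - 1 / 2) *
      (1 / (6 * (t - 1)) * (s * t + t - 2 * s - 1 + r) - s / 2) =
      (r - ((s + t - 1) - (s - 1) * (t - 1))) * (r - (s * t + (s - 1) * (t - 1))) /
        (36 * (t - 1) ^ 2) := by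
    field_simp
    ring
  rw [mem_Ioo_min_max_iff_mul_neg, hprod]
  exact div_neg_of_neg_of_pos hroot (by positivity)
end

section
/- For 0 < w < 1, define z(w) = ((1-2w)(2-w)(1+w) + 2(w^2-w+1)^{3/2}) / (1-w)^2. Then z(w) < 27/4 for all w in (0,1). -/
/-!
Clearing the denominator, the claim reads `2 s^{3/2} < R(w)` with `s = w² - w + 1` and
`R(w) = 27/4 (1-w)² - (1-2w)(2-w)(1+w)`. For `w ≤ 1` we have
`4R = 8(1-w)³ + 15w² - 18w + 11 > 0`, so it suffices to compare squares, and
`16 (R² - 4s³) = (1-w)³ (432w² - 513w + 297)`, where the quadratic has negative discriminant.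
-/

open Real

lemma rpow_three_halves_sq {s : ℝ} (hs : 0 ≤ s) : (s ^ ((3 : ℝ) / 2)) ^ 2 = s ^ 3 := by
  rw [← rpow_natCast _ 2, ← rpow_mul hs]
  norm_num

lemma two_mul_rpow_three_halves_lt {s R : ℝ} (hs : 0 ≤ s) (hR : 0 ≤ R) (h : 4 * s ^ 3 < R ^ 2) :
    2 * s ^ ((3 : ℝ) / 2) < R := by
  refine lt_of_pow_lt_pow_left₀ 2 hR ?_
  rwa [mul_pow, rpow_three_halves_sq hs, show (2 : ℝ) ^ 2 = 4 by norm_num]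

noncomputable def zGap (w : ℝ) : ℝ := 27 / 4 * (1 - w) ^ 2 - (1 - 2 * w) * (2 - w) * (1 + w)

lemma four_mul_zGap (w : ℝ) : 4 * zGap w = 8 * (1 - w) ^ 3 + (15 * w ^ 2 - 18 * w + 11) := by
  unfold zGap; ring

lemma zGap_pos {w : ℝ} (hw : w ≤ 1) : 0 < zGap w := by
  have hcube : 0 ≤ (1 - w) ^ 3 := pow_nonneg (by linarith) 3
  have hquad : 0 < 15 * w ^ 2 - 18 * w + 11 := by nlinarith [sq_nonneg (15 * w - 9)]
  linarith [four_mul_zGap w]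

lemma zGap_sq_sub_four_mul_cube (w : ℝ) :
    16 * (zGap w ^ 2 - 4 * (w ^ 2 - w + 1) ^ 3) = (1 - w) ^ 3 * (432 * w ^ 2 - 513 * w + 297) := by
  unfold zGap; ring

lemma four_mul_cube_lt_zGap_sq {w : ℝ} (hw : w < 1) :
    4 * (w ^ 2 - w + 1) ^ 3 < zGap w ^ 2 := by
  have hcube : 0 < (1 - w) ^ 3 := pow_pos (by linarith) 3
  have hquad : 0 < 432 * w ^ 2 - 513 * w + 297 := by nlinarith [sq_nonneg (864 * w - 513)]
  linarith [zGap_sq_sub_four_mul_cube w, mul_pos hcube hquad]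

theorem z_lt (w : ℝ) (hw : w ∈ Set.Ioo (0 : ℝ) 1) :
    ((1 - 2 * w) * (2 - w) * (1 + w) + 2 * (w ^ 2 - w + 1) ^ ((3 : ℝ) / 2))
      / (1 - w) ^ 2 < 27 / 4 := by
  have hw1 : w < 1 := hw.2
  have hs : 0 ≤ w ^ 2 - w + 1 := by nlinarith [sq_nonneg (w - 1)]
  have hroot := two_mul_rpow_three_halves_lt hs (zGap_pos hw1.le).le (four_mul_cube_lt_zGap_sq hw1)
  rw [div_lt_iff₀ (pow_pos (sub_pos.2 hw1) 2)]
  unfold zGap at hroot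
  linarith
end

section
/- The function z(w) = ((1-2w)(2-w)(1+w) + 2(w^2-w+1)^{3/2})/(1-w)^2 has no critical point in (0,1): its derivative z'(w) = (2w^3 - 6w^2 + 9w - 1 + (2w^2 - 5w - 1)sqrt(w^2-w+1))/(w-1)^3 never vanishes for 0 < w < 1. -/
/-! On `(0, 1)` the numerator `A + B √q` of `z'`, with `q = w² - w + 1`, is negative: `B < 0`, and
`A² - B² q = 27 w (w - 1)³ < 0` gives `|A| < -B √q`. -/

open Real Set

lemma rpow_three_halves_eq_mul_sqrt {x : ℝ} (hx : 0 ≤ x) : x ^ ((3 : ℝ) / 2) = x * √x := by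
  rw [show (3 : ℝ) / 2 = 1 + 1 / 2 by norm_num, rpow_add' hx (by norm_num), rpow_one,
    sqrt_eq_rpow]

lemma sq_sub_add_one_pos (w : ℝ) : 0 < w ^ 2 - w + 1 := by
  nlinarith [sq_nonneg (w - 1 / 2)]

lemma hasDerivAt_rpow_three_halves_quadratic (w : ℝ) :
    HasDerivAt (fun x : ℝ => (x ^ 2 - x + 1) ^ ((3 : ℝ) / 2))
      (3 / 2 * (2 * w - 1) * √(w ^ 2 - w + 1)) w := by
  have hq : HasDerivAt (fun x : ℝ => x ^ 2 - x + 1) (2 * w - 1) w := by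
    simpa using ((hasDerivAt_pow 2 w).fun_sub (hasDerivAt_id' w)).add_const 1
  convert hq.rpow_const (p := 3 / 2) (Or.inr (by norm_num)) using 1
  rw [show (3 : ℝ) / 2 - 1 = 1 / 2 by norm_num, ← sqrt_eq_rpow]
  ring

lemma hasDerivAt_z {w : ℝ} (hw : w ≠ 1) :
    HasDerivAt (fun x : ℝ => ((1 - 2 * x) * (2 - x) * (1 + x)
        + 2 * (x ^ 2 - x + 1) ^ ((3 : ℝ) / 2)) / (1 - x) ^ 2)
      ((2 * w ^ 3 - 6 * w ^ 2 + 9 * w - 1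
          + (2 * w ^ 2 - 5 * w - 1) * √(w ^ 2 - w + 1)) / (w - 1) ^ 3) w := by
  have hcubic : HasDerivAt (fun x : ℝ => (1 - 2 * x) * (2 - x) * (1 + x))
      (6 * w ^ 2 - 6 * w - 3) w := by
    have h := (((hasDerivAt_id' w).const_mul 2).const_sub 1).fun_mul
      ((hasDerivAt_id' w).const_sub 2) |>.fun_mul ((hasDerivAt_id' w).const_add 1)
    exact h.congr_deriv (by ring)
  have hden : HasDerivAt (fun x : ℝ => (1 - x) ^ 2) (-(2 * (1 - w))) w := by
    simpa using ((hasDerivAt_id' w).const_sub 1).fun_pow 2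
  have h1w : 1 - w ≠ 0 := sub_ne_zero.mpr (Ne.symm hw)
  refine ((hcubic.fun_add ((hasDerivAt_rpow_three_halves_quadratic w).const_mul 2)).fun_div hden
    (pow_ne_zero 2 h1w)).congr_deriv ?_
  rw [rpow_three_halves_eq_mul_sqrt (sq_sub_add_one_pos w).le]
  have hw1 : w - 1 ≠ 0 := sub_ne_zero.mpr hw
  field_simp
  ring

lemma add_neg_of_neg_of_sq_lt_sq {R : Type*} [Ring R] [LinearOrder R] [IsStrictOrderedRing R]
    {a b : R} (hb : b < 0) (h : a ^ 2 < b ^ 2) : a + b < 0 :=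
  lt_neg_iff_add_neg.mp (abs_lt_of_sq_lt_sq' (a := a) (b := -b) (by rwa [neg_sq])
    (neg_nonneg.mpr hb.le)).2

lemma critical_numerator_neg {w : ℝ} (hw : w ∈ Ioo (0 : ℝ) 1) :
    2 * w ^ 3 - 6 * w ^ 2 + 9 * w - 1 + (2 * w ^ 2 - 5 * w - 1) * √(w ^ 2 - w + 1) < 0 := by
  obtain ⟨hw0, hw1⟩ := hw
  have hq := sq_sub_add_one_pos w
  have hB : 2 * w ^ 2 - 5 * w - 1 < 0 := by nlinarith
  refine add_neg_of_neg_of_sq_lt_sq (mul_neg_of_neg_of_pos hB (sqrt_pos.mpr hq)) ?_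
  have hdiff : 27 * w * (w - 1) ^ 3 < 0 :=
    mul_neg_of_pos_of_neg (by positivity) (Odd.pow_neg (by decide) (by linarith))
  rw [mul_pow, sq_sqrt hq.le]
  linear_combination hdiff

theorem z_no_critical_point
    (z : ℝ → ℝ)
    (hz : ∀ w, z w = ((1 - 2 * w) * (2 - w) * (1 + w)
        + 2 * (w ^ 2 - w + 1) ^ ((3 : ℝ) / 2)) / (1 - w) ^ 2) :
    ∀ w ∈ Set.Ioo (0 : ℝ) 1,
      deriv z w = (2 * w ^ 3 - 6 * w ^ 2 + 9 * w - 1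
          + (2 * w ^ 2 - 5 * w - 1) * Real.sqrt (w ^ 2 - w + 1)) / (w - 1) ^ 3 ∧
      (2 * w ^ 3 - 6 * w ^ 2 + 9 * w - 1
          + (2 * w ^ 2 - 5 * w - 1) * Real.sqrt (w ^ 2 - w + 1)) / (w - 1) ^ 3 ≠ 0 := by
  intro w hw
  rw [funext hz]
  refine ⟨(hasDerivAt_z hw.2.ne).deriv, div_ne_zero (critical_numerator_neg hw).ne ?_⟩
  exact pow_ne_zero 3 (sub_ne_zero.mpr hw.2.ne)
end

section
/- Let Q(z) = z(z-1)(z-(1+2i))(z-2i). Then the roots of Q''(z) are 1/2 + (1/2)i and 1/2 + (3/2)i. In particular these differ from the foci of the maximal-area ellipse inscribed in the rectangle with vertices 0, 1, 1+2i, 2i, which are 1/2 + (1 + sqrt(3)/2)i and 1/2 + (1 - sqrt(3)/2)i. -/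
/-!
For `Q = (z - a)(z - b)(z - c)(z - d)`, `Q''` is twice the sum of the six pairwise products
of the factors. For the vertices `0, 1, 1 + 2i, 2i` this quadratic is
`12 (z - (1/2 + i/2)) (z - (1/2 + 3i/2))`. The foci have imaginary parts `1 ± √3/2`,
neither of which is `1/2`.
-/

open Complex

section ProductOfLinearFactors

variable {𝕜 : Type*} [NontriviallyNormedField 𝕜] (a b c d z : 𝕜)

theorem hasDerivAt_sub_mul_sub_mul_sub :
    HasDerivAt (fun z => (z - a) * (z - b) * (z - c))
      ((z - b) * (z - c) + (z - a) * (z - c) + (z - a) * (z - b)) z := by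
  have h := (((hasDerivAt_id z).sub_const a).mul ((hasDerivAt_id z).sub_const b)).mul
    ((hasDerivAt_id z).sub_const c)
  exact h.congr_deriv (by simp only [id, Pi.mul_apply]; ring)

theorem deriv_sub_mul_sub_mul_sub_mul_sub :
    deriv (fun z => (z - a) * (z - b) * (z - c) * (z - d)) =
      fun z => (z - b) * (z - c) * (z - d) + (z - a) * (z - c) * (z - d)
        + (z - a) * (z - b) * (z - d) + (z - a) * (z - b) * (z - c) := by
  funext z
  have h := (hasDerivAt_sub_mul_sub_mul_sub a b c z).mul ((hasDerivAt_id z).sub_const d)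
  exact (h.congr_deriv (by simp only [id]; ring)).deriv

/-- Each pair of factors occurs in exactly two of the four triple products, whence the `2`. -/
theorem deriv_deriv_sub_mul_sub_mul_sub_mul_sub :
    deriv (deriv (fun z => (z - a) * (z - b) * (z - c) * (z - d))) z =
      2 * ((z - a) * (z - b) + (z - a) * (z - c) + (z - a) * (z - d)
        + (z - b) * (z - c) + (z - b) * (z - d) + (z - c) * (z - d)) := by
  rw [deriv_sub_mul_sub_mul_sub_mul_sub]
  have h := (((hasDerivAt_sub_mul_sub_mul_sub b c d z).add
    (hasDerivAt_sub_mul_sub_mul_sub a c d z)).add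
    (hasDerivAt_sub_mul_sub_mul_sub a b d z)).add (hasDerivAt_sub_mul_sub_mul_sub a b c z)
  exact (h.congr_deriv (by ring)).deriv

end ProductOfLinearFactors

theorem rectangle_pairwise_products_eq (z : ℂ) :
    2 * ((z - 0) * (z - 1) + (z - 0) * (z - (1 + 2 * I)) + (z - 0) * (z - 2 * I)
        + (z - 1) * (z - (1 + 2 * I)) + (z - 1) * (z - 2 * I)
        + (z - (1 + 2 * I)) * (z - 2 * I)) =
      12 * ((z - (1 / 2 + 1 / 2 * I)) * (z - (1 / 2 + 3 / 2 * I))) := by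
  linear_combination (-1 : ℂ) * I_sq

theorem one_half_add_one_half_mul_I_notMem_foci :
    (1 / 2 + 1 / 2 * I : ℂ) ∉
      ({1 / 2 + (1 + √3 / 2) * I, 1 / 2 + (1 - √3 / 2) * I} : Set ℂ) := by
  have h3 : √3 ^ 2 = 3 := Real.sq_sqrt (by norm_num)
  have cancel {w : ℂ} (h : 1 / 2 + 1 / 2 * I = 1 / 2 + w * I) : 1 / 2 = w :=
    mul_right_cancel₀ I_ne_zero (add_left_cancel h)
  rintro (h | h)
  · have him : (1 / 2 : ℝ) = 1 + √3 / 2 := ofReal_injective (by push_cast; exact cancel h)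
    nlinarith
  · have him : (1 / 2 : ℝ) = 1 - √3 / 2 := ofReal_injective (by push_cast; exact cancel h)
    nlinarith

open Complex in
theorem roots_Q'' :
    {z : ℂ | deriv (deriv (fun z : ℂ =>
        z * (z - 1) * (z - (1 + 2 * I)) * (z - 2 * I))) z = 0}
      = {1 / 2 + (1 / 2) * I, 1 / 2 + (3 / 2) * I} ∧
    ({1 / 2 + (1 / 2) * I, 1 / 2 + (3 / 2) * I} : Set ℂ)
      ≠ {1 / 2 + (1 + Real.sqrt 3 / 2) * I, 1 / 2 + (1 - Real.sqrt 3 / 2) * I} := by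
  refine ⟨?_, fun h => one_half_add_one_half_mul_I_notMem_foci (h ▸ Set.mem_insert _ _)⟩
  ext z
  have hQ : (fun z : ℂ => z * (z - 1) * (z - (1 + 2 * I)) * (z - 2 * I)) =
      fun z => (z - 0) * (z - 1) * (z - (1 + 2 * I)) * (z - 2 * I) := by
    simp only [sub_zero]
  simp only [Set.mem_ofPred_eq, hQ, deriv_deriv_sub_mul_sub_mul_sub_mul_sub,
    rectangle_pairwise_products_eq, mul_eq_zero, sub_eq_zero, OfNat.ofNat_ne_zero, false_or,
    Set.mem_insert_iff, Set.mem_singleton_iff]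
end
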